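/- For any real payoff vectors P00, P01, P10, P11 ∈ ℝ² and any λ00, λ01, λ10 ≥ 0 with λ00 + λ01 + λ10 = 1 and λ00 < 1, the EWL payoff vector at the strategy profile (U(0, −arccos√(λ01/(1−λ00)), 0), U(2·arccos√λ00, arccos√(λ01/(1−λ00)), 0)) equals λ00·P00 + λ01·P01 + λ10·P10. -/

import Mathlib

/-!
With `θ₁ = β₁ = β₂ = 0` and opposite phases `α₁ = -α₂`, the `P11` amplitude vanishes and the
remaining squared amplitudes are `cos² b`, `cos² a · sin² b` and `sin² a · sin² b`, where
`θ₂ = 2b` and `α₂ = a`. Choosing `cos² b = λ00` and `cos² a = λ01 / (1 - λ00)` makes them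
`λ00`, `λ01` and `(1 - λ00) - λ01 = λ10`.
-/

open Real

/-- The EWL payoff vector for a 2×2 bimatrix game with payoff vectors
`P00 P01 P10 P11 : ℝ × ℝ`, at the profile `(U(θ1,α1,β1), U(θ2,α2,β2))`. -/
noncomputable def ewlV (P00 P01 P10 P11 : ℝ × ℝ) (θ1 α1 β1 θ2 α2 β2 : ℝ) : ℝ × ℝ :=
  ((cos (α1 + α2) * cos (θ1/2) * cos (θ2/2) +
    sin (β1 + β2) * sin (θ1/2) * sin (θ2/2))^2) • P00 +
  ((sin (α2 - β1) * sin (θ1/2) * cos (θ2/2) +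
    cos (α1 - β2) * cos (θ1/2) * sin (θ2/2))^2) • P01 +
  ((cos (α2 - β1) * sin (θ1/2) * cos (θ2/2) +
    sin (α1 - β2) * cos (θ1/2) * sin (θ2/2))^2) • P10 +
  ((cos (β1 + β2) * sin (θ1/2) * sin (θ2/2) -
    sin (α1 + α2) * cos (θ1/2) * cos (θ2/2))^2) • P11

theorem ewlV_zero_neg_zero_two_mul_zero (P00 P01 P10 P11 : ℝ × ℝ) (a b : ℝ) :
    ewlV P00 P01 P10 P11 0 (-a) 0 (2 * b) a 0 =
      cos b ^ 2 • P00 + (cos a * sin b) ^ 2 • P01 + (sin a * sin b) ^ 2 • P10 := by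
  have hb : 2 * b / 2 = b := by ring
  simp only [ewlV, hb, neg_add_cancel, add_zero, zero_div, cos_zero, sin_zero, sub_zero, cos_neg,
    sin_neg, mul_zero, zero_mul, mul_one, one_mul, zero_add, neg_mul, even_two.neg_pow,
    zero_pow two_ne_zero, zero_smul]

theorem cos_arccos_sqrt_sq {t : ℝ} (ht₀ : 0 ≤ t) (ht₁ : t ≤ 1) : cos (arccos √t) ^ 2 = t := by
  rw [cos_arccos (by linarith [sqrt_nonneg t]) (sqrt_le_one.mpr ht₁), sq_sqrt ht₀]

theorem sin_arccos_sqrt_sq {t : ℝ} (ht₀ : 0 ≤ t) (ht₁ : t ≤ 1) :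
    sin (arccos √t) ^ 2 = 1 - t := by
  rw [sin_arccos, sq_sqrt ht₀, sq_sqrt (by linarith)]

/-- A suitable two-parameter EWL strategy profile realizes any convex
combination `λ00·P00 + λ01·P01 + λ10·P10` of three pure payoff vectors. -/
theorem ewl_convex_combination_00_01_10 (P00 P01 P10 P11 : ℝ × ℝ)
    (l00 l01 l10 : ℝ) (h00 : 0 ≤ l00) (h01 : 0 ≤ l01) (h10 : 0 ≤ l10)
    (hsum : l00 + l01 + l10 = 1) (hlt : l00 < 1) :
    ewlV P00 P01 P10 P11
      0 (-(Real.arccos (Real.sqrt (l01 / (1 - l00))))) 0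
      (2 * Real.arccos (Real.sqrt l00)) (Real.arccos (Real.sqrt (l01 / (1 - l00)))) 0 =
      l00 • P00 + l01 • P01 + l10 • P10 := by
  have hpos : 0 < 1 - l00 := by linarith
  have hx₀ : 0 ≤ l01 / (1 - l00) := div_nonneg h01 hpos.le
  have hx₁ : l01 / (1 - l00) ≤ 1 := (div_le_one hpos).mpr (by linarith)
  rw [ewlV_zero_neg_zero_two_mul_zero, mul_pow, mul_pow, cos_arccos_sqrt_sq h00 hlt.le,
    sin_arccos_sqrt_sq h00 hlt.le, cos_arccos_sqrt_sq hx₀ hx₁, sin_arccos_sqrt_sq hx₀ hx₁]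
  have hl01 : l01 / (1 - l00) * (1 - l00) = l01 := div_mul_cancel₀ _ hpos.ne'
  have hl10 : (1 - l01 / (1 - l00)) * (1 - l00) = l10 := by
    rw [sub_mul, hl01]; linarith
  rw [hl01, hl10]
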